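/- Let λ(t, M) = K/(t+c)^p · β e^{-β(M - M₀)} for K, β, c > 0, p, M₀, t ≥ 0, and let π(t, M) = Φ((M - μ(t))/s) with s > 0 and μ : [0,∞) → ℝ measurable. Then for every t ≥ 0, ∫_{-∞}^{∞} λ(t, M) π(t, M) dM = K/(t+c)^p · exp(-β(μ(t) - M₀) + ½β²s²). -/

import Mathlib

/-!
Write `Φ((M - m) / s)` as the standard Gaussian measure of `{u | m + s u ≤ M}` and swap the two
integrals (Tonelli). For fixed `u` the magnitude integral of `β e^{-β (M - a)}` over
`[m + s u, ∞)` is `e^{-β (m + s u - a)}`, so what remains is `e^{-β (m - a)}` times the moment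
generating function of the standard Gaussian at `-β s`, which is `e^{β² s² / 2}`.
-/

open Real MeasureTheory

noncomputable def stdNormalCDF (z : ℝ) : ℝ :=
  ∫ t in Set.Iic z, (1 / Real.sqrt (2 * π)) * Real.exp (-t ^ 2 / 2)

open ProbabilityTheory Set ENNReal

theorem lintegral_mul_measure_setOf_le {X : Type*} [MeasurableSpace X] (μ : Measure ℝ) [SFinite μ]
    (ν : Measure X) [SFinite ν] {f : ℝ → ℝ≥0∞} (hf : Measurable f) {g : X → ℝ}
    (hg : Measurable g) :
    ∫⁻ M, f M * ν {u | g u ≤ M} ∂μ = ∫⁻ u, ∫⁻ M in Ici (g u), f M ∂μ ∂ν := by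
  let S : Set (ℝ × X) := {q | g q.2 ≤ q.1}
  have hS : MeasurableSet S := measurableSet_le (hg.comp measurable_snd) measurable_fst
  calc ∫⁻ M, f M * ν {u | g u ≤ M} ∂μ
      = ∫⁻ M, ∫⁻ u, S.indicator (fun q => f q.1) (M, u) ∂ν ∂μ := by
        refine lintegral_congr fun M => ?_
        rw [← lintegral_indicator_const (measurableSet_le hg measurable_const)]
        rfl
    _ = ∫⁻ u, ∫⁻ M, S.indicator (fun q => f q.1) (M, u) ∂μ ∂ν :=
        lintegral_lintegral_swap ((hf.comp measurable_fst).indicator hS).aemeasurable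
    _ = ∫⁻ u, ∫⁻ M in Ici (g u), f M ∂μ ∂ν := by
        refine lintegral_congr fun u => ?_
        rw [← lintegral_indicator measurableSet_Ici]
        rfl

theorem lintegral_Ici_exp_mul {a : ℝ} (ha : a < 0) (c : ℝ) :
    ∫⁻ x in Ici c, ENNReal.ofReal (exp (a * x)) = ENNReal.ofReal (-exp (a * c) / a) := by
  rw [← ofReal_integral_eq_lintegral_ofReal
    ((integrableOn_Ici_iff_integrableOn_Ioi).mpr (integrableOn_exp_mul_Ioi ha c))
    (ae_of_all _ fun _ => (exp_pos _).le), integral_Ici_eq_integral_Ioi, integral_exp_mul_Ioi ha]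

theorem lintegral_Ici_exponential_tail {β : ℝ} (hβ : 0 < β) (a c : ℝ) :
    ∫⁻ M in Ici c, ENNReal.ofReal (β * exp (-β * (M - a)))
      = ENNReal.ofReal (exp (-β * (c - a))) := by
  have hsplit : ∀ M, β * exp (-β * (M - a)) = β * exp (β * a) * exp (-β * M) := fun M => by
    rw [mul_assoc, ← exp_add]; ring_nf
  simp_rw [hsplit, ofReal_mul (by positivity : 0 ≤ β * exp (β * a))]
  rw [lintegral_const_mul _ (by fun_prop), lintegral_Ici_exp_mul (by linarith), ← ofReal_mul
    (by positivity), neg_div_neg_eq, mul_sub, mul_comm β a, neg_mul, ← mul_neg, sub_eq_add_neg,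
    exp_add]
  field_simp

theorem integral_exp_mul_gaussianReal_zero_one (b : ℝ) :
    ∫ u, exp (b * u) ∂gaussianReal 0 1 = exp (b ^ 2 / 2) := by
  simpa [mgf] using congrFun (mgf_id_gaussianReal (μ := 0) (v := 1)) b

theorem stdNormalCDF_eq_cdf_gaussianReal : stdNormalCDF = cdf (gaussianReal 0 1) := by
  ext z
  rw [cdf_eq_real, measureReal_def, gaussianReal_apply_eq_integral _ one_ne_zero,
    toReal_ofReal (setIntegral_nonneg measurableSet_Iic fun _ _ => gaussianPDFReal_nonneg _ _ _)]
  simp [stdNormalCDF, gaussianPDFReal]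

theorem stdNormalCDF_nonneg (z : ℝ) : 0 ≤ stdNormalCDF z :=
  stdNormalCDF_eq_cdf_gaussianReal ▸ cdf_nonneg _ z

@[fun_prop]
theorem measurable_stdNormalCDF : Measurable stdNormalCDF :=
  stdNormalCDF_eq_cdf_gaussianReal ▸ monotone_cdf _ |>.measurable

theorem ofReal_stdNormalCDF_div {s : ℝ} (hs : 0 < s) (m M : ℝ) :
    ENNReal.ofReal (stdNormalCDF ((M - m) / s)) = gaussianReal 0 1 {u | m + s * u ≤ M} := by
  rw [stdNormalCDF_eq_cdf_gaussianReal, ofReal_cdf]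
  congr 1
  ext u
  change u ≤ (M - m) / s ↔ m + s * u ≤ M
  rw [le_div_iff₀ hs]
  constructor <;> intro <;> linarith

theorem integral_exponential_mul_stdNormalCDF {β s : ℝ} (hβ : 0 < β) (hs : 0 < s) (a m : ℝ) :
    ∫ M, β * exp (-β * (M - a)) * stdNormalCDF ((M - m) / s)
      = exp (-β * (m - a) + β ^ 2 * s ^ 2 / 2) := by
  have hmgf : Integrable (fun u => exp (-β * (m - a)) * exp (-β * s * u)) (gaussianReal 0 1) :=
    (integrable_exp_mul_gaussianReal _).const_mul _
  have hlintegral : ∫⁻ M, ENNReal.ofReal (β * exp (-β * (M - a)) * stdNormalCDF ((M - m) / s))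
      = ENNReal.ofReal (exp (-β * (m - a) + β ^ 2 * s ^ 2 / 2)) :=
    calc _ = ∫⁻ M, ENNReal.ofReal (β * exp (-β * (M - a)))
              * gaussianReal 0 1 {u | m + s * u ≤ M} := by
            simp_rw [ofReal_mul (by positivity : 0 ≤ β * exp _), ofReal_stdNormalCDF_div hs]
      _ = ∫⁻ u, (∫⁻ M in Ici (m + s * u), ENNReal.ofReal (β * exp (-β * (M - a))))
            ∂gaussianReal 0 1 :=
            lintegral_mul_measure_setOf_le _ _ (by fun_prop) (by fun_prop)
      _ = ∫⁻ u, ENNReal.ofReal (exp (-β * (m - a)) * exp (-β * s * u)) ∂gaussianReal 0 1 := by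
            refine lintegral_congr fun u => ?_
            rw [lintegral_Ici_exponential_tail hβ, ← exp_add]
            ring_nf
      _ = ENNReal.ofReal (∫ u, exp (-β * (m - a)) * exp (-β * s * u) ∂gaussianReal 0 1) :=
            (ofReal_integral_eq_lintegral_ofReal hmgf (ae_of_all _ fun _ => by positivity)).symm
      _ = _ := by
            rw [integral_const_mul, integral_exp_mul_gaussianReal_zero_one, ← exp_add]
            ring_nf
  rw [integral_eq_lintegral_of_nonneg_ae
    (ae_of_all _ fun M => mul_nonneg (by positivity) (stdNormalCDF_nonneg _))
    (by fun_prop : Measurable _).aestronglyMeasurable, hlintegral, toReal_ofReal (exp_pos _).le]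

theorem detected_intensity_formula_general (K β c p M₀ s : ℝ) (μ : ℝ → ℝ)
    (hβ : 0 < β) (hs : 0 < s) :
    ∀ t : ℝ, 0 ≤ t →
      (∫ M : ℝ, (K / (t + c) ^ p * (β * Real.exp (-β * (M - M₀)))) *
          stdNormalCDF ((M - μ t) / s))
        = K / (t + c) ^ p * Real.exp (-β * (μ t - M₀) + (1/2) * β ^ 2 * s ^ 2) := by
  intro t _
  simp_rw [mul_assoc (K / (t + c) ^ p)]
  rw [integral_const_mul, integral_exponential_mul_stdNormalCDF hβ hs]
  ring_nf

/-- The detected-event intensity `ν(t)` (eq. 10): integrating the joint occurrence rate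
times the probit detection function over magnitudes. -/
theorem detected_intensity_formula (K β c p M₀ s : ℝ) (μ : ℝ → ℝ)
    (hK : 0 < K) (hβ : 0 < β) (hc : 0 < c) (hp : 0 ≤ p) (hM₀ : 0 ≤ M₀) (hs : 0 < s)
    (hμ : Measurable μ) :
    ∀ t : ℝ, 0 ≤ t →
      (∫ M : ℝ, (K / (t + c) ^ p * (β * Real.exp (-β * (M - M₀)))) *
          stdNormalCDF ((M - μ t) / s))
        = K / (t + c) ^ p * Real.exp (-β * (μ t - M₀) + (1/2) * β ^ 2 * s ^ 2) :=
  detected_intensity_formula_general K β c p M₀ s μ hβ hs
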